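/- Let Ω be a subset of ℝⁿ, let u be a C² function and V a C¹ function on a neighborhood of Ω, and let a, b > 0. Then at every point x ∈ Ω one has a·‖∇²u(x)‖² + b·|∇u(x)|² ≥ a·b·(Lu(x))² / ( a·|∇V(x)|² + b·n ), where Lu = Δu − ⟨∇u, ∇V⟩. -/
import Mathlib


open MeasureTheory
open scoped RealInnerProductSpace ENNReal

noncomputable section

abbrev Euc (n : ℕ) : Type := EuclideanSpace ℝ (Fin n)

/-- A convex body: a compact convex set with nonempty interior. -/
def IsConvexBody {n : ℕ} (K : Set (Euc n)) : Prop :=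
  IsCompact K ∧ Convex ℝ K ∧ (interior K).Nonempty

/-- The support function `h_K(u) = sup_{y ∈ K} ⟨u, y⟩`. -/
def suppFn {n : ℕ} (K : Set (Euc n)) (u : Euc n) : ℝ :=
  sSup ((fun y => ⟪u, y⟫) '' K)

/-- `lpComb p lam K L` is the `L_p` combination `lam·K +_p (1−lam)·L`;
for `p = 0` it is the logarithmic combination. -/
def lpComb {n : ℕ} (p lam : ℝ) (K L : Set (Euc n)) : Set (Euc n) :=
  if p = 0 then
    {x | ∀ u : Euc n, ‖u‖ = 1 → ⟪x, u⟫ ≤ suppFn K u ^ lam * suppFn L u ^ (1 - lam)}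
  else
    {x | ∀ u : Euc n, ‖u‖ = 1 →
      ⟪x, u⟫ ≤ (lam * suppFn K u ^ p + (1 - lam) * suppFn L u ^ p) ^ (1 / p)}


/-- The Laplacian `Δ V` of a function on `ℝⁿ`, as the trace of its Hessian. -/
def lapl {n : ℕ} (V : Euc n → ℝ) (x : Euc n) : ℝ :=
  ∑ i : Fin n,
    iteratedFDeriv ℝ 2 V x ![EuclideanSpace.single i 1, EuclideanSpace.single i 1]

/-- The squared Hilbert–Schmidt (Frobenius) norm `‖∇²u‖²` of the Hessian. -/
def hessHS2 {n : ℕ} (u : Euc n → ℝ) (x : Euc n) : ℝ :=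
  ∑ i : Fin n, ∑ j : Fin n,
    (iteratedFDeriv ℝ 2 u x ![EuclideanSpace.single i 1, EuclideanSpace.single j 1]) ^ 2

lemma amgm_aux (s t m : ℝ) (hs : 0 ≤ s) (ht : 0 ≤ t) (hm : m ^ 2 ≤ s * t) :
    -(2 * m) ≤ s + t := by
  nlinarith [sq_nonneg (s - t), sq_nonneg (s + t + 2 * m)]

lemma key_aux (a b H G W N x y : ℝ) (ha : 0 < a) (hb : 0 < b) (hH : 0 ≤ H) (hG : 0 ≤ G)
    (hW : 0 ≤ W) (hN : 0 ≤ N) (hx : x ^ 2 ≤ N * H) (hy : y ^ 2 ≤ G * W) :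
    a * b * (x - y) ^ 2 ≤ (a * H + b * G) * (a * W + b * N) := by
  have h0 : x ^ 2 * y ^ 2 ≤ (N * H) * (G * W) :=
    mul_le_mul hx hy (sq_nonneg y) (by positivity)
  have h1 : (a * b * x * y) ^ 2 ≤ (a ^ 2 * H * W) * (b ^ 2 * G * N) := by
    nlinarith [mul_le_mul_of_nonneg_left h0 (by positivity : (0:ℝ) ≤ a ^ 2 * b ^ 2)]
  have h2 := amgm_aux (a ^ 2 * H * W) (b ^ 2 * G * N) (a * b * x * y)
    (by positivity) (by positivity) h1
  nlinarith [mul_le_mul_of_nonneg_left hx (le_of_lt (mul_pos ha hb)),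
    mul_le_mul_of_nonneg_left hy (le_of_lt (mul_pos ha hb))]

lemma lapl_sq_le {n : ℕ} (u : Euc n → ℝ) (x : Euc n) :
    (lapl u x) ^ 2 ≤ (n : ℝ) * hessHS2 u x := by
  set d : Fin n → ℝ := fun i =>
    iteratedFDeriv ℝ 2 u x ![EuclideanSpace.single i 1, EuclideanSpace.single i 1] with hd
  have h1 : (lapl u x) ^ 2 ≤ (n : ℝ) * ∑ i : Fin n, d i ^ 2 := by
    have := sq_sum_le_card_mul_sum_sq (s := (Finset.univ : Finset (Fin n))) (f := d)
    simpa [lapl, hd] using this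
  refine h1.trans (mul_le_mul_of_nonneg_left ?_ (Nat.cast_nonneg n))
  unfold hessHS2
  refine Finset.sum_le_sum fun i _ => ?_
  have : d i ^ 2 =
      (iteratedFDeriv ℝ 2 u x ![EuclideanSpace.single i 1, EuclideanSpace.single i 1]) ^ 2 := rfl
  rw [this]
  exact Finset.single_le_sum (f := fun j : Fin n =>
      (iteratedFDeriv ℝ 2 u x ![EuclideanSpace.single i 1, EuclideanSpace.single j 1]) ^ 2)
    (fun j _ => sq_nonneg _) (Finset.mem_univ i)

lemma inner_sq_le {n : ℕ} (x y : Euc n) : ⟪x, y⟫ ^ 2 ≤ ‖x‖ ^ 2 * ‖y‖ ^ 2 := by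
  calc ⟪x, y⟫ ^ 2 = |⟪x, y⟫| ^ 2 := (sq_abs _).symm
    _ ≤ (‖x‖ * ‖y‖) ^ 2 := pow_le_pow_left₀ (abs_nonneg _) (abs_real_inner_le_norm x y) 2
    _ = ‖x‖ ^ 2 * ‖y‖ ^ 2 := by ring

/-- Lemma 6.2: pointwise, for `a, b > 0`,
`a‖∇²u‖² + b|∇u|² ≥ ab(Lu)²/(a|∇V|² + bn)` where `Lu = Δu - ⟨∇u, ∇V⟩`. -/
theorem hessian_grad_lower_bound (n : ℕ) (Ω U : Set (Euc n))
    (hU : IsOpen U) (hΩU : Ω ⊆ U)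
    (u V : Euc n → ℝ) (hu : ContDiffOn ℝ 2 u U) (hV : ContDiffOn ℝ 1 V U)
    (a b : ℝ) (ha : 0 < a) (hb : 0 < b) :
    ∀ x ∈ Ω,
      a * b * (lapl u x - ⟪gradient u x, gradient V x⟫) ^ 2
          / (a * ‖gradient V x‖ ^ 2 + b * n)
        ≤ a * hessHS2 u x + b * ‖gradient u x‖ ^ 2 := by
  intro x hx
  have hH : 0 ≤ hessHS2 u x := by
    unfold hessHS2; positivity
  have hG : 0 ≤ ‖gradient u x‖ ^ 2 := sq_nonneg _
  have hkey := key_aux a b (hessHS2 u x) (‖gradient u x‖ ^ 2) (‖gradient V x‖ ^ 2) (n : ℝ)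
    (lapl u x) (⟪gradient u x, gradient V x⟫) ha hb hH hG (sq_nonneg _) (Nat.cast_nonneg n)
    (lapl_sq_le u x) (by simpa [mul_comm] using inner_sq_le (gradient u x) (gradient V x))
  rcases eq_or_lt_of_le (by positivity : (0:ℝ) ≤ a * ‖gradient V x‖ ^ 2 + b * n) with hD | hD
  · rw [← hD, div_zero]
    positivity
  · rw [div_le_iff₀ hD]
    linarith [hkey]

end
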